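/- Let X_1,…,X_T, Y_1,…,Y_T, U_1,…,U_T be finite-valued random processes on a common probability space satisfying, for each t ∈ {1,…,T}: (i) X^t and U_t are conditionally independent given (Y^t, U^{t−1}); and (ii) X_t and Y^{t−1} are conditionally independent given (X^{t−1}, U^{t−1}). Then the gap between the two directed informations equals a conditional mutual information: I(X^T→Y^T‖U^{T−1}) − I(X^T→U^T) = I(X^T; Y^T | U^T). In particular the gap is nonnegative. -/
import Mathlib


/-- The distribution of a random variable `X` on a finite probability space
with weights `p`. -/
noncomputable def distOf {Ω α : Type} [Fintype Ω] [DecidableEq α]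
    (p : Ω → ℝ) (X : Ω → α) : α → ℝ :=
  fun a => ∑ ω : Ω, if X ω = a then p ω else 0

/-- Shannon entropy `H(X) = -∑ₓ P(X=x) log P(X=x)`. -/
noncomputable def entropy {Ω α : Type} [Fintype Ω] [Fintype α] [DecidableEq α]
    (p : Ω → ℝ) (X : Ω → α) : ℝ :=
  ∑ a : α, Real.negMulLog (distOf p X a)

/-- The conditional probability weights given the event `Z = z`. -/
noncomputable def condProb {Ω γ : Type} [Fintype Ω] [DecidableEq γ]
    (p : Ω → ℝ) (Z : Ω → γ) (z : γ) : Ω → ℝ :=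
  fun ω => if Z ω = z then p ω / distOf p Z z else 0

/-- Conditional entropy `H(X|Z) = ∑_z P(Z=z) H(X|Z=z)`. -/
noncomputable def condEntropy {Ω α γ : Type} [Fintype Ω] [Fintype α] [Fintype γ]
    [DecidableEq α] [DecidableEq γ] (p : Ω → ℝ) (X : Ω → α) (Z : Ω → γ) : ℝ :=
  ∑ z : γ, distOf p Z z * entropy (condProb p Z z) X

/-- Mutual information `I(X;Y) = H(X) - H(X|Y)`. -/
noncomputable def mutualInfo {Ω α β : Type} [Fintype Ω] [Fintype α] [Fintype β]
    [DecidableEq α] [DecidableEq β] (p : Ω → ℝ) (X : Ω → α) (Y : Ω → β) : ℝ :=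
  entropy p X - condEntropy p X Y

/-- Conditional mutual information `I(X;Y|Z) = ∑_z P(Z=z) I(X;Y|Z=z)`. -/
noncomputable def condMutualInfo {Ω α β γ : Type} [Fintype Ω] [Fintype α] [Fintype β]
    [Fintype γ] [DecidableEq α] [DecidableEq β] [DecidableEq γ]
    (p : Ω → ℝ) (X : Ω → α) (Y : Ω → β) (Z : Ω → γ) : ℝ :=
  ∑ z : γ, distOf p Z z * mutualInfo (condProb p Z z) X Y

/-- Conditional independence of `A` and `B` given `C`:
`P(A=a,B=b,C=c) P(C=c) = P(A=a,C=c) P(B=b,C=c)` for all `a, b, c`. -/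
def CondIndep {Ω α β γ : Type} [Fintype Ω] [DecidableEq α] [DecidableEq β] [DecidableEq γ]
    (p : Ω → ℝ) (A : Ω → α) (B : Ω → β) (C : Ω → γ) : Prop :=
  ∀ (a : α) (b : β) (c : γ),
    distOf p (fun ω => (A ω, B ω, C ω)) (a, b, c) * distOf p C c =
      distOf p (fun ω => (A ω, C ω)) (a, c) * distOf p (fun ω => (B ω, C ω)) (b, c)

/-- The block `X^t = (X_1, …, X_t)` of a process (0-based: the first `t` entries). -/
def prefixRV {Ω 𝒳 : Type} (X : ℕ → Ω → 𝒳) (t : ℕ) : Ω → (Fin t → 𝒳) :=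
  fun ω i => X i ω

set_option linter.unusedSectionVars false
section Main
variable {Ω α β γ : Type} [Fintype Ω] [Fintype α] [Fintype β] [Fintype γ]
  [DecidableEq α] [DecidableEq β] [DecidableEq γ] {p : Ω → ℝ}
open Real Finset

variable {Ω α β γ : Type} [Fintype Ω] [Fintype α] [Fintype β] [Fintype γ]
  [DecidableEq α] [DecidableEq β] [DecidableEq γ] {p : Ω → ℝ}

lemma distOf_nonneg (hp0 : ∀ ω, 0 ≤ p ω) (X : Ω → α) (a : α) : 0 ≤ distOf p X a :=
  Finset.sum_nonneg fun ω _ => by split <;> [exact hp0 ω; exact le_rfl]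

lemma condProb_nonneg (hp0 : ∀ ω, 0 ≤ p ω) (Z : Ω → γ) (z : γ) (ω : Ω) :
    0 ≤ condProb p Z z ω := by
  unfold condProb; split
  · exact div_nonneg (hp0 ω) (distOf_nonneg hp0 Z z)
  · exact le_rfl

-- marginal: ∑_w P(W=w, Z=z) = P(Z=z)
lemma marg_fst (W : Ω → α) (Z : Ω → γ) (z : γ) :
    ∑ w : α, distOf p (fun ω => (W ω, Z ω)) (w, z) = distOf p Z z := by
  unfold distOf
  rw [Finset.sum_comm]
  refine Finset.sum_congr rfl fun ω _ => ?_
  by_cases hz : Z ω = z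
  · simp [hz, Prod.ext_iff]
  · simp [hz, Prod.ext_iff]

-- marginal: ∑_b P(A=a, B=b, C=c) = P(A=a, C=c)
lemma marg_snd (A : Ω → α) (B : Ω → β) (C : Ω → γ) (a : α) (c : γ) :
    ∑ b : β, distOf p (fun ω => (A ω, B ω, C ω)) (a, b, c)
      = distOf p (fun ω => (A ω, C ω)) (a, c) := by
  unfold distOf
  rw [Finset.sum_comm]
  refine Finset.sum_congr rfl fun ω _ => ?_
  by_cases h : A ω = a ∧ C ω = c
  · simp [h.1, h.2, Prod.ext_iff]
  · rw [if_neg (by simp [Prod.ext_iff]; tauto)]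
    refine Finset.sum_eq_zero fun b _ => if_neg (by simp [Prod.ext_iff]; tauto)

-- marginal: ∑_a P(A=a, B=b, C=c) = P(B=b, C=c)
lemma marg_fst3 (A : Ω → α) (B : Ω → β) (C : Ω → γ) (b : β) (c : γ) :
    ∑ a : α, distOf p (fun ω => (A ω, B ω, C ω)) (a, b, c)
      = distOf p (fun ω => (B ω, C ω)) (b, c) := by
  unfold distOf
  rw [Finset.sum_comm]
  refine Finset.sum_congr rfl fun ω _ => ?_
  by_cases h : B ω = b ∧ C ω = c
  · simp [h.1, h.2, Prod.ext_iff]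
  · rw [if_neg (by simp [Prod.ext_iff]; tauto)]
    refine Finset.sum_eq_zero fun a _ => if_neg (by simp [Prod.ext_iff]; tauto)

lemma distOf_condProb (W : Ω → α) (Z : Ω → γ) (z : γ) (w : α) :
    distOf (condProb p Z z) W w
      = distOf p (fun ω => (W ω, Z ω)) (w, z) / distOf p Z z := by
  unfold distOf condProb
  rw [Finset.sum_div]
  refine Finset.sum_congr rfl fun ω _ => ?_
  by_cases hw : W ω = w <;> by_cases hz : Z ω = z <;> simp [hw, hz, Prod.ext_iff, distOf]

lemma scalar_negMulLog {u v : ℝ} (h0 : 0 ≤ u) (h : u ≤ v) :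
    v * negMulLog (u / v) = negMulLog u + u * Real.log v := by
  rcases eq_or_lt_of_le h0 with h0|h0
  · simp [← h0, negMulLog]
  · have hv : 0 < v := lt_of_lt_of_le h0 h
    rw [negMulLog, negMulLog, Real.log_div (ne_of_gt h0) (ne_of_gt hv)]
    field_simp
    ring

lemma key2 {s : α → ℝ} {v : ℝ} (hs0 : ∀ a, 0 ≤ s a) (hv : v = ∑ a, s a) :
    ∑ a, v * negMulLog (s a / v) = ∑ a, negMulLog (s a) + v * Real.log v := by
  have hle : ∀ a, s a ≤ v := fun a =>
    hv ▸ Finset.single_le_sum (fun b _ => hs0 b) (Finset.mem_univ a)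
  calc ∑ a, v * negMulLog (s a / v)
      = ∑ a, (negMulLog (s a) + s a * Real.log v) :=
        Finset.sum_congr rfl fun a _ => scalar_negMulLog (hs0 a) (hle a)
    _ = ∑ a, negMulLog (s a) + (∑ a, s a) * Real.log v := by
        rw [Finset.sum_add_distrib, Finset.sum_mul]
    _ = _ := by rw [← hv]

lemma condEntropy_eq (hp0 : ∀ ω, 0 ≤ p ω) (W : Ω → α) (Z : Ω → γ) :
    condEntropy p W Z
      = entropy p (fun ω => (W ω, Z ω)) - entropy p Z := by
  unfold condEntropy entropy
  calc ∑ z, distOf p Z z * ∑ w, negMulLog (distOf (condProb p Z z) W w)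
      = ∑ z, ∑ w, distOf p Z z *
          negMulLog (distOf p (fun ω => (W ω, Z ω)) (w, z) / distOf p Z z) := by
        refine Finset.sum_congr rfl fun z _ => ?_
        rw [Finset.mul_sum]
        exact Finset.sum_congr rfl fun w _ => by rw [distOf_condProb]
    _ = ∑ z, (∑ w, negMulLog (distOf p (fun ω => (W ω, Z ω)) (w, z))
          + distOf p Z z * Real.log (distOf p Z z)) := by
        refine Finset.sum_congr rfl fun z _ => ?_
        exact key2 (fun w => distOf_nonneg hp0 _ _) (marg_fst W Z z).symm
    _ = _ := by
        rw [Finset.sum_add_distrib]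
        rw [Fintype.sum_prod_type, Finset.sum_comm]
        have : ∀ z, distOf p Z z * Real.log (distOf p Z z) = -negMulLog (distOf p Z z) := by
          intro z; simp [negMulLog]
        simp only [this, Finset.sum_neg_distrib]
        ring

lemma key3 {s : α → β → ℝ} {u : α → ℝ} {v : β → ℝ} {w : ℝ}
    (hs0 : ∀ a b, 0 ≤ s a b)
    (hu : ∀ a, u a = ∑ b, s a b) (hv : ∀ b, v b = ∑ a, s a b)
    (hw : w = ∑ a, u a)
    (hfact : ∀ a b, s a b * w = u a * v b) :
    (∑ a, ∑ b, negMulLog (s a b)) + negMulLog w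
      = (∑ a, negMulLog (u a)) + ∑ b, negMulLog (v b) := by
  have hu0 : ∀ a, 0 ≤ u a := fun a => (hu a) ▸ Finset.sum_nonneg fun b _ => hs0 a b
  have hv0 : ∀ b, 0 ≤ v b := fun b => (hv b) ▸ Finset.sum_nonneg fun a _ => hs0 a b
  have hsu : ∀ a b, s a b ≤ u a := fun a b =>
    (hu a) ▸ Finset.single_le_sum (fun b' _ => hs0 a b') (Finset.mem_univ b)
  have hsv : ∀ a b, s a b ≤ v b := fun a b =>
    (hv b) ▸ Finset.single_le_sum (fun a' _ => hs0 a' b) (Finset.mem_univ a)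
  by_cases hw0 : w = 0
  · have huz : ∀ a, u a = 0 := by
      have hsum : ∑ a, u a = 0 := by rw [← hw, hw0]
      intro a
      exact (Finset.sum_eq_zero_iff_of_nonneg (fun a _ => hu0 a)).mp hsum a (Finset.mem_univ a)
    have hsz : ∀ a b, s a b = 0 := fun a b =>
      le_antisymm (by rw [← huz a]; exact hsu a b) (hs0 a b)
    have hvz : ∀ b, v b = 0 := fun b => by rw [hv b]; exact Finset.sum_eq_zero fun a _ => hsz a b
    simp [hw0, hsz, huz, hvz]
  · have hwpos : 0 < w :=
      lt_of_le_of_ne (hw ▸ Finset.sum_nonneg fun a _ => hu0 a) (Ne.symm hw0)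
    have hpt : ∀ a b, negMulLog (s a b)
        = -(s a b) * Real.log (u a) + (-(s a b) * Real.log (v b) + s a b * Real.log w) := by
      intro a b
      by_cases hs : s a b = 0
      · simp [hs]
      · have hsp : 0 < s a b := lt_of_le_of_ne (hs0 a b) (Ne.symm hs)
        have hup : 0 < u a := lt_of_lt_of_le hsp (hsu a b)
        have hvp : 0 < v b := lt_of_lt_of_le hsp (hsv a b)
        have hse : s a b = u a * v b / w := by
          field_simp
          exact hfact a b
        rw [negMulLog]
        nth_rewrite 2 [hse]
        rw [Real.log_div (by positivity) hw0, Real.log_mul (ne_of_gt hup) (ne_of_gt hvp)]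
        ring
    have h1 : ∀ a, ∑ b, -(s a b) * Real.log (u a) = negMulLog (u a) := by
      intro a
      rw [← Finset.sum_mul, Finset.sum_neg_distrib, ← hu a, negMulLog]
    have h2 : ∑ a, ∑ b, -(s a b) * Real.log (v b) = ∑ b, negMulLog (v b) := by
      rw [Finset.sum_comm]
      refine Finset.sum_congr rfl fun b _ => ?_
      rw [← Finset.sum_mul, Finset.sum_neg_distrib, ← hv b, negMulLog]
    have h3 : ∑ a, ∑ b, s a b * Real.log w = -negMulLog w := by
      have : ∀ a, ∑ b, s a b * Real.log w = u a * Real.log w := by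
        intro a; rw [← Finset.sum_mul, ← hu a]
      simp only [this]
      rw [← Finset.sum_mul, ← hw, negMulLog]
      ring
    calc (∑ a, ∑ b, negMulLog (s a b)) + negMulLog w
        = (∑ a, ∑ b, (-(s a b) * Real.log (u a)
            + (-(s a b) * Real.log (v b) + s a b * Real.log w))) + negMulLog w := by
          rw [Finset.sum_congr rfl fun a _ => Finset.sum_congr rfl fun b _ => hpt a b]
      _ = ((∑ a, ∑ b, -(s a b) * Real.log (u a))
            + ((∑ a, ∑ b, -(s a b) * Real.log (v b))
              + (∑ a, ∑ b, s a b * Real.log w))) + negMulLog w := by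
          simp only [Finset.sum_add_distrib]
      _ = _ := by
          rw [h2, h3, Finset.sum_congr rfl fun a _ => h1 a]
          ring


lemma condIndep_entropy (hp0 : ∀ ω, 0 ≤ p ω) {A : Ω → α} {B : Ω → β} {C : Ω → γ}
    (h : CondIndep p A B C) :
    entropy p (fun ω => (A ω, B ω, C ω)) + entropy p C
      = entropy p (fun ω => (A ω, C ω)) + entropy p (fun ω => (B ω, C ω)) := by
  unfold entropy
  simp only [Fintype.sum_prod_type]
  have r1 : (∑ a : α, ∑ b : β, ∑ c : γ,
        negMulLog (distOf p (fun ω => (A ω, B ω, C ω)) (a, b, c)))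
      = ∑ c : γ, ∑ a : α, ∑ b : β,
        negMulLog (distOf p (fun ω => (A ω, B ω, C ω)) (a, b, c)) := by
    calc _ = ∑ a : α, ∑ c : γ, ∑ b : β,
          negMulLog (distOf p (fun ω => (A ω, B ω, C ω)) (a, b, c)) :=
        Finset.sum_congr rfl fun a _ => Finset.sum_comm
      _ = _ := Finset.sum_comm
  have r2 : (∑ a : α, ∑ c : γ, negMulLog (distOf p (fun ω => (A ω, C ω)) (a, c)))
      = ∑ c : γ, ∑ a : α, negMulLog (distOf p (fun ω => (A ω, C ω)) (a, c)) :=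
    Finset.sum_comm
  have r3 : (∑ b : β, ∑ c : γ, negMulLog (distOf p (fun ω => (B ω, C ω)) (b, c)))
      = ∑ c : γ, ∑ b : β, negMulLog (distOf p (fun ω => (B ω, C ω)) (b, c)) :=
    Finset.sum_comm
  rw [r1, r2, r3, ← Finset.sum_add_distrib, ← Finset.sum_add_distrib]
  refine Finset.sum_congr rfl fun c _ => ?_
  exact key3 (fun a b => distOf_nonneg hp0 _ _)
    (fun a => (marg_snd A B C a c).symm)
    (fun b => (marg_fst3 A B C b c).symm)
    ((marg_fst A C c).symm)
    (fun a b => h a b c)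

lemma distOf_comp_eq_zero {f : α → β} {W : Ω → α} {b : β}
    (hb : ∀ a, f a ≠ b) : distOf p (fun ω => f (W ω)) b = 0 :=
  Finset.sum_eq_zero fun ω _ => if_neg (hb (W ω))

lemma entropy_congr {f : α → β} (hf : Function.Injective f)
    {W : Ω → α} {W' : Ω → β} (hW : ∀ ω, W' ω = f (W ω)) :
    entropy p W' = entropy p W := by
  unfold entropy
  have h0 : ∀ b ∈ Finset.univ \ Finset.univ.image f,
      negMulLog (distOf p W' b) = 0 := by
    intro b hb
    simp only [Finset.mem_sdiff, Finset.mem_image] at hb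
    have : distOf p W' b = 0 := by
      have : ∀ a, f a ≠ b := by
        intro a hab
        exact hb.2 ⟨a, Finset.mem_univ a, hab⟩
      calc distOf p W' b = distOf p (fun ω => f (W ω)) b := by
            unfold distOf; exact Finset.sum_congr rfl fun ω _ => by rw [hW ω]
        _ = 0 := distOf_comp_eq_zero this
    rw [this, negMulLog_zero]
  rw [← Finset.sum_subset (Finset.subset_univ (Finset.univ.image f))
    (fun b _ hb => h0 b (Finset.mem_sdiff.mpr ⟨Finset.mem_univ b, hb⟩)),
    Finset.sum_image (fun a _ a' _ haa' => hf haa')]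
  refine Finset.sum_congr rfl fun a _ => ?_
  congr 1
  unfold distOf
  refine Finset.sum_congr rfl fun ω _ => ?_
  rw [hW ω]
  by_cases ha : W ω = a
  · simp [ha]
  · rw [if_neg (fun hc => ha (hf hc)), if_neg ha]

lemma entropy_subsingleton {W : Ω → α} (hsub : Subsingleton α)
    (hp1 : ∑ ω, p ω = 1) : entropy p W = 0 := by
  have hΩ : Nonempty Ω := by
    by_contra hempty
    rw [not_nonempty_iff] at hempty
    rw [Finset.univ_eq_empty, Finset.sum_empty] at hp1
    exact zero_ne_one hp1
  obtain ⟨ω0⟩ := hΩ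
  have : Unique α := ⟨⟨W ω0⟩, fun a => hsub.elim a (W ω0)⟩
  rw [entropy, Fintype.sum_unique]
  have : distOf p W default = 1 := by
    rw [distOf, ← hp1]
    exact Finset.sum_congr rfl fun ω _ => if_pos (hsub.elim _ _)
  rw [this, negMulLog_one]


lemma condMutualInfo_eq (hp0 : ∀ ω, 0 ≤ p ω) (A : Ω → α) (B : Ω → β) (C : Ω → γ) :
    condMutualInfo p A B C
      = entropy p (fun ω => (A ω, C ω)) + entropy p (fun ω => (B ω, C ω))
        - entropy p (fun ω => ((A ω, B ω), C ω)) - entropy p C := by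
  have hq : ∀ c ω, 0 ≤ condProb p C c ω := fun c => condProb_nonneg hp0 C c
  unfold condMutualInfo mutualInfo
  calc ∑ c, distOf p C c * (entropy (condProb p C c) A - condEntropy (condProb p C c) A B)
      = ∑ c, (distOf p C c * entropy (condProb p C c) A
          - distOf p C c * entropy (condProb p C c) (fun ω => (A ω, B ω))
          + distOf p C c * entropy (condProb p C c) B) := by
        refine Finset.sum_congr rfl fun c _ => ?_
        rw [condEntropy_eq (hq c) A B]
        ring
    _ = condEntropy p A C - condEntropy p (fun ω => (A ω, B ω)) C + condEntropy p B C := by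
        rw [Finset.sum_add_distrib, Finset.sum_sub_distrib]
        rfl
    _ = _ := by
        rw [condEntropy_eq hp0 A C, condEntropy_eq hp0 (fun ω => (A ω, B ω)) C,
          condEntropy_eq hp0 B C]
        ring

end Main

lemma snoc_inj {n : ℕ} {𝒳 : Type} {v w : Fin n → 𝒳} {x y : 𝒳}
    (h : (Fin.snoc v x : Fin (n+1) → 𝒳) = Fin.snoc w y) : v = w ∧ x = y := by
  constructor
  · have := congrArg Fin.init h
    rwa [Fin.init_snoc, Fin.init_snoc] at this
  · have := congrFun h (Fin.last n)
    rwa [Fin.snoc_last, Fin.snoc_last] at this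

lemma prefix_succ {Ω 𝒳 : Type} (X : ℕ → Ω → 𝒳) (t : ℕ) (ω : Ω) :
    prefixRV X (t+1) ω = Fin.snoc (prefixRV X t ω) (X t ω) := by
  funext i
  refine Fin.lastCases ?_ (fun j => ?_) i
  · simp [prefixRV, Fin.snoc_last]
  · simp [prefixRV, Fin.snoc_castSucc]

section Main2
variable {Ω α β γ : Type} [Fintype Ω] [Fintype α] [Fintype β] [Fintype γ]
  [DecidableEq α] [DecidableEq β] [DecidableEq γ] {p : Ω → ℝ}

end Main2

/-- Under the feedback structure of cloud-based control
(for each stage `t`: (i) `X^t ⟂ U_t | (Y^t, U^{t-1})` and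
(ii) `X_t ⟂ Y^{t-1} | (X^{t-1}, U^{t-1})`), the gap between the causally conditioned
directed information and the directed information equals a conditional mutual
information: `I(X^T → Y^T ‖ U^{T-1}) − I(X^T → U^T) = I(X^T; Y^T | U^T)`.
(0-based indexing: `prefixRV X t` is the block `X^t` of the first `t` entries.) -/
theorem stmt4 {Ω 𝒳 𝒴 𝒰 : Type} [Fintype Ω] [Fintype 𝒳] [Fintype 𝒴] [Fintype 𝒰]
    [DecidableEq 𝒳] [DecidableEq 𝒴] [DecidableEq 𝒰]
    (p : Ω → ℝ) (hp0 : ∀ ω, 0 ≤ p ω) (hp1 : ∑ ω, p ω = 1)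
    (T : ℕ) (X : ℕ → Ω → 𝒳) (Y : ℕ → Ω → 𝒴) (U : ℕ → Ω → 𝒰)
    (hcontrol : ∀ t < T, CondIndep p (prefixRV X (t + 1)) (U t)
      (fun ω => (prefixRV Y (t + 1) ω, prefixRV U t ω)))
    (hplant : ∀ t < T, CondIndep p (X t) (prefixRV Y t)
      (fun ω => (prefixRV X t ω, prefixRV U t ω))) :
    (∑ t ∈ Finset.range T,
        condMutualInfo p (prefixRV X (t + 1)) (Y t)
          (fun ω => (prefixRV Y t ω, prefixRV U t ω))) -
      (∑ t ∈ Finset.range T,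
        condMutualInfo p (prefixRV X (t + 1)) (U t) (prefixRV U t)) =
      condMutualInfo p (prefixRV X T) (prefixRV Y T) (prefixRV U T) := by
  classical
  set D : ℕ → ℝ := fun n =>
    entropy p (fun ω => (prefixRV X n ω, prefixRV U n ω))
      + entropy p (fun ω => (prefixRV Y n ω, prefixRV U n ω))
      - entropy p (fun ω => ((prefixRV X n ω, prefixRV Y n ω), prefixRV U n ω))
      - entropy p (prefixRV U n) with hD
  have key : ∀ t ∈ Finset.range T,
      condMutualInfo p (prefixRV X (t + 1)) (Y t)
          (fun ω => (prefixRV Y t ω, prefixRV U t ω))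
        - condMutualInfo p (prefixRV X (t + 1)) (U t) (prefixRV U t)
      = D (t + 1) - D t := by
    intro t htmem
    have ht : t < T := Finset.mem_range.mp htmem
    have hI := condIndep_entropy hp0 (hcontrol t ht)
    have hII := condIndep_entropy hp0 (hplant t ht)
    have r1 : entropy p (fun ω => (prefixRV Y (t+1) ω, prefixRV U t ω))
        = entropy p (fun ω => (Y t ω, (prefixRV Y t ω, prefixRV U t ω))) :=
      entropy_congr
        (f := fun q : 𝒴 × ((Fin t → 𝒴) × (Fin t → 𝒰)) =>
          ((Fin.snoc q.2.1 q.1 : Fin (t+1) → 𝒴), q.2.2))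
        (by rintro ⟨y, v, u⟩ ⟨y', v', u'⟩ h
            simp only [Prod.mk.injEq] at h ⊢
            obtain ⟨hv, hy⟩ := snoc_inj h.1
            exact ⟨hy, hv, h.2⟩)
        (fun ω => by simp [prefix_succ])
    have r2 : entropy p (fun ω => (prefixRV X (t+1) ω, (prefixRV Y (t+1) ω, prefixRV U t ω)))
        = entropy p (fun ω => ((prefixRV X (t+1) ω, Y t ω), (prefixRV Y t ω, prefixRV U t ω))) :=
      entropy_congr
        (f := fun q : ((Fin (t+1) → 𝒳) × 𝒴) × ((Fin t → 𝒴) × (Fin t → 𝒰)) =>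
          (q.1.1, ((Fin.snoc q.2.1 q.1.2 : Fin (t+1) → 𝒴), q.2.2)))
        (by rintro ⟨⟨x, y⟩, v, u⟩ ⟨⟨x', y'⟩, v', u'⟩ h
            simp only [Prod.mk.injEq] at h ⊢
            obtain ⟨hv, hy⟩ := snoc_inj h.2.1
            exact ⟨⟨h.1, hy⟩, hv, h.2.2⟩)
        (fun ω => by simp [prefix_succ])
    have r3 : entropy p (prefixRV U (t+1))
        = entropy p (fun ω => (U t ω, prefixRV U t ω)) :=
      entropy_congr
        (f := fun q : 𝒰 × (Fin t → 𝒰) => (Fin.snoc q.2 q.1 : Fin (t+1) → 𝒰))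
        (by rintro ⟨u, v⟩ ⟨u', v'⟩ h
            obtain ⟨hv, hu⟩ := snoc_inj h
            simp only [Prod.mk.injEq]
            exact ⟨hu, hv⟩)
        (fun ω => by simp [prefix_succ])
    have r4 : entropy p (fun ω => (prefixRV X (t+1) ω, prefixRV U (t+1) ω))
        = entropy p (fun ω => ((prefixRV X (t+1) ω, U t ω), prefixRV U t ω)) :=
      entropy_congr
        (f := fun q : ((Fin (t+1) → 𝒳) × 𝒰) × (Fin t → 𝒰) =>
          (q.1.1, (Fin.snoc q.2 q.1.2 : Fin (t+1) → 𝒰)))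
        (by rintro ⟨⟨x, u⟩, v⟩ ⟨⟨x', u'⟩, v'⟩ h
            simp only [Prod.mk.injEq] at h ⊢
            obtain ⟨hv, hu⟩ := snoc_inj h.2
            exact ⟨⟨h.1, hu⟩, hv⟩)
        (fun ω => by simp [prefix_succ])
    have r5 : entropy p (fun ω => (prefixRV X (t+1) ω, (prefixRV Y (t+1) ω, prefixRV U (t+1) ω)))
        = entropy p (fun ω => (prefixRV X (t+1) ω, U t ω, (prefixRV Y (t+1) ω, prefixRV U t ω))) :=
      entropy_congr
        (f := fun q : (Fin (t+1) → 𝒳) × (𝒰 × ((Fin (t+1) → 𝒴) × (Fin t → 𝒰))) =>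
          (q.1, (q.2.2.1, (Fin.snoc q.2.2.2 q.2.1 : Fin (t+1) → 𝒰))))
        (by rintro ⟨x, u, y, v⟩ ⟨x', u', y', v'⟩ h
            simp only [Prod.mk.injEq] at h ⊢
            obtain ⟨hv, hu⟩ := snoc_inj h.2.2
            exact ⟨h.1, hu, h.2.1, hv⟩)
        (fun ω => by simp [prefix_succ])
    have r6 : entropy p (fun ω => (prefixRV Y (t+1) ω, prefixRV U (t+1) ω))
        = entropy p (fun ω => (U t ω, (prefixRV Y (t+1) ω, prefixRV U t ω))) :=
      entropy_congr
        (f := fun q : 𝒰 × ((Fin (t+1) → 𝒴) × (Fin t → 𝒰)) =>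
          (q.2.1, (Fin.snoc q.2.2 q.1 : Fin (t+1) → 𝒰)))
        (by rintro ⟨u, y, v⟩ ⟨u', y', v'⟩ h
            simp only [Prod.mk.injEq] at h ⊢
            obtain ⟨hv, hu⟩ := snoc_inj h.2
            exact ⟨hu, h.1, hv⟩)
        (fun ω => by simp [prefix_succ])
    have r7 : entropy p (fun ω => (prefixRV X (t+1) ω, (prefixRV Y t ω, prefixRV U t ω)))
        = entropy p (fun ω => (X t ω, prefixRV Y t ω, (prefixRV X t ω, prefixRV U t ω))) :=
      entropy_congr
        (f := fun q : 𝒳 × ((Fin t → 𝒴) × ((Fin t → 𝒳) × (Fin t → 𝒰))) =>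
          ((Fin.snoc q.2.2.1 q.1 : Fin (t+1) → 𝒳), (q.2.1, q.2.2.2)))
        (by rintro ⟨x, y, v, u⟩ ⟨x', y', v', u'⟩ h
            simp only [Prod.mk.injEq] at h ⊢
            obtain ⟨hv, hx⟩ := snoc_inj h.1
            exact ⟨hx, h.2.1, hv, h.2.2⟩)
        (fun ω => by simp [prefix_succ])
    have r8 : entropy p (fun ω => (prefixRV X (t+1) ω, prefixRV U t ω))
        = entropy p (fun ω => (X t ω, (prefixRV X t ω, prefixRV U t ω))) :=
      entropy_congr
        (f := fun q : 𝒳 × ((Fin t → 𝒳) × (Fin t → 𝒰)) =>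
          ((Fin.snoc q.2.1 q.1 : Fin (t+1) → 𝒳), q.2.2))
        (by rintro ⟨x, v, u⟩ ⟨x', v', u'⟩ h
            simp only [Prod.mk.injEq] at h ⊢
            obtain ⟨hv, hx⟩ := snoc_inj h.1
            exact ⟨hx, hv, h.2⟩)
        (fun ω => by simp [prefix_succ])
    have r9 : entropy p (fun ω => (prefixRV X (t+1) ω, (prefixRV Y (t+1) ω, prefixRV U (t+1) ω)))
        = entropy p (fun ω => ((prefixRV X (t+1) ω, prefixRV Y (t+1) ω), prefixRV U (t+1) ω)) :=
      entropy_congr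
        (f := fun q : ((Fin (t+1) → 𝒳) × (Fin (t+1) → 𝒴)) × (Fin (t+1) → 𝒰) =>
          (q.1.1, (q.1.2, q.2)))
        (by rintro ⟨⟨x, y⟩, u⟩ ⟨⟨x', y'⟩, u'⟩ h
            simp only [Prod.mk.injEq] at h ⊢
            exact ⟨⟨h.1, h.2.1⟩, h.2.2⟩)
        (fun ω => rfl)
    have r10 : entropy p (fun ω => (prefixRV Y t ω, (prefixRV X t ω, prefixRV U t ω)))
        = entropy p (fun ω => ((prefixRV X t ω, prefixRV Y t ω), prefixRV U t ω)) :=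
      entropy_congr
        (f := fun q : ((Fin t → 𝒳) × (Fin t → 𝒴)) × (Fin t → 𝒰) =>
          (q.1.2, (q.1.1, q.2)))
        (by rintro ⟨⟨x, y⟩, u⟩ ⟨⟨x', y'⟩, u'⟩ h
            simp only [Prod.mk.injEq] at h ⊢
            exact ⟨⟨h.2.1, h.1⟩, h.2.2⟩)
        (fun ω => rfl)
    rw [condMutualInfo_eq hp0, condMutualInfo_eq hp0]
    simp only [hD]
    linarith [hI, hII, r1, r2, r3, r4, r5, r6, r7, r8, r9, r10]
  have hsum : (∑ t ∈ Finset.range T,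
        condMutualInfo p (prefixRV X (t + 1)) (Y t)
          (fun ω => (prefixRV Y t ω, prefixRV U t ω))) -
      (∑ t ∈ Finset.range T,
        condMutualInfo p (prefixRV X (t + 1)) (U t) (prefixRV U t))
      = ∑ t ∈ Finset.range T, (D (t + 1) - D t) := by
    rw [← Finset.sum_sub_distrib]
    exact Finset.sum_congr rfl key
  have hsub : ∀ (τ : Type), Subsingleton (Fin 0 → τ) :=
    fun τ => ⟨fun f g => funext fun i => i.elim0⟩
  have hD0 : D 0 = 0 := by
    simp only [hD]
    have s1 : Subsingleton ((Fin 0 → 𝒳) × (Fin 0 → 𝒰)) :=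
      ⟨fun a b => Prod.ext ((hsub 𝒳).elim _ _) ((hsub 𝒰).elim _ _)⟩
    have s2 : Subsingleton ((Fin 0 → 𝒴) × (Fin 0 → 𝒰)) :=
      ⟨fun a b => Prod.ext ((hsub 𝒴).elim _ _) ((hsub 𝒰).elim _ _)⟩
    have s3 : Subsingleton (((Fin 0 → 𝒳) × (Fin 0 → 𝒴)) × (Fin 0 → 𝒰)) :=
      ⟨fun a b => Prod.ext
        (Prod.ext ((hsub 𝒳).elim _ _) ((hsub 𝒴).elim _ _)) ((hsub 𝒰).elim _ _)⟩
    rw [entropy_subsingleton s1 hp1, entropy_subsingleton s2 hp1,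
      entropy_subsingleton s3 hp1, entropy_subsingleton (hsub 𝒰) hp1]
    norm_num
  rw [hsum, Finset.sum_range_sub, hD0, sub_zero, condMutualInfo_eq hp0]
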